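/- Fix M ∈ ℂ^{n×n} and ε > 0, and let M' = M ⊕ εN ⊕ εN ∈ ℂ^{(n+4)×(n+4)} where N = [[0,2],[0,0]]. Let q be a uniformly random unit vector in ℂ^n and q' a uniformly random unit vector in ℂ^{n+4}. Then Pr(|q* M q| ≤ ε) ≤ Pr(|q'^* M' q'| ≤ ε). -/

import Mathlib

open MeasureTheory Matrix Filter
open scoped Pointwise

noncomputable section

/-- The Borel σ-algebra on the unitary group. -/
instance unitaryMeasurableSpace {n : ℕ} : MeasurableSpace (Matrix.unitaryGroup (Fin n) ℂ) :=
  borel _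

instance unitaryBorelSpace {n : ℕ} : BorelSpace (Matrix.unitaryGroup (Fin n) ℂ) :=
  ⟨rfl⟩

/-- The first column of a unitary matrix: a uniformly random unit vector when the
unitary is Haar-distributed. -/
def firstColumn {n : ℕ} (h : 1 ≤ n) (U : Matrix.unitaryGroup (Fin n) ℂ) : Fin n → ℂ :=
  fun i => (U : Matrix (Fin n) (Fin n) ℂ) i ⟨0, h⟩

/-- The quadratic form `x* M x`. -/
def qform {m : ℕ} (M : Matrix (Fin m) (Fin m) ℂ) (x : Fin m → ℂ) : ℂ :=
  dotProduct (star x) (M.mulVec x)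

/-- Block-diagonal direct sum of square matrices. -/
def dsum {a b : ℕ} (A : Matrix (Fin a) (Fin a) ℂ) (B : Matrix (Fin b) (Fin b) ℂ) :
    Matrix (Fin (a + b)) (Fin (a + b)) ℂ :=
  Matrix.reindex finSumFinEquiv finSumFinEquiv (Matrix.fromBlocks A 0 0 B)

/-- The nilpotent matrix `N = [[0,2],[0,0]]`. -/
def Nmat : Matrix (Fin 2) (Fin 2) ℂ := !![0, 2; 0, 0]

/-- The regularization `M' = M ⊕ εN ⊕ εN`. -/
def Mprime {n : ℕ} (M : Matrix (Fin n) (Fin n) ℂ) (ε : ℝ) :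
    Matrix (Fin (n + 4)) (Fin (n + 4)) ℂ :=
  Matrix.reindex (finCongr (by omega)) (finCongr (by omega))
    (dsum (dsum M ((ε : ℂ) • Nmat)) ((ε : ℂ) • Nmat))

end

/-!
Couple `q` and `q'` through a Haar unitary `V ∈ U(n+4)` and an independent `U ∈ U(n)`: the
first column `q'` of `(U ⊕ 1) V` is again Haar distributed, and its top block is `U x`, where
`x` is the top block of the first column of `V`. For fixed `V`, the condition
`|(Ux)* M (Ux)| ≤ ε ‖Ux‖²` is invariant under scaling `x`, so by right invariance of Haar
measure it has the same probability as `|q* M q| ≤ ε`. Under this condition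
`|q'* M' q'| ≤ ε`, since each block `εN` contributes at most `ε ‖y‖²` (because
`2 |y₀| |y₁| ≤ |y₀|² + |y₁|²`) and `‖q'‖ = 1`. Integrating over `V` (Fubini) gives the
inequality.
-/

section UnitaryGroupTopology

variable {n 𝕜 : Type*} [Fintype n] [DecidableEq n] [RCLike 𝕜]

instance Matrix.unitaryGroup.instSecondCountableTopology :
    SecondCountableTopology (unitaryGroup n 𝕜) :=
  haveI : SecondCountableTopology (Matrix n n 𝕜) :=
    inferInstanceAs (SecondCountableTopology (n → n → 𝕜))
  TopologicalSpace.Subtype.secondCountableTopology (unitaryGroup n 𝕜 : Set (Matrix n n 𝕜))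

instance Matrix.unitaryGroup.instCompactSpace : CompactSpace (unitaryGroup n 𝕜) :=
  isCompact_iff_compactSpace.mp <|
    (isCompact_univ_pi fun _ => isCompact_univ_pi fun _ =>
      isCompact_closedBall (0 : 𝕜) 1).of_isClosed_subset
      (isClosed_unitary (R := Matrix n n 𝕜)) fun A hA i _ j _ => by
        simpa using entry_norm_bound_of_unitary hA i j

end UnitaryGroupTopology

theorem MeasureTheory.Measure.IsHaarMeasure.isMulRightInvariant_of_isProbabilityMeasure
    {G : Type*} [Group G] [TopologicalSpace G] [IsTopologicalGroup G] [LocallyCompactSpace G]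
    [MeasurableSpace G] [BorelSpace G] (μ : Measure G) [μ.IsHaarMeasure]
    [IsProbabilityMeasure μ] : μ.IsMulRightInvariant :=
  ⟨fun g =>
    haveI := Measure.isProbabilityMeasure_map (μ := μ) (measurable_mul_const g).aemeasurable
    Measure.isHaarMeasure_eq_of_isProbabilityMeasure _ _⟩

/-- Fubini on `μ × ν`: by left invariance of `ν`, every fibre `{y | f x * y ∈ t}` has measure
`ν t`. -/
theorem measure_le_of_forall_le_measure_mul_mem {α H : Type*} [MeasurableSpace α]
    [MeasurableSpace H] [Group H] [MeasurableMul₂ H] (μ : Measure α) [IsProbabilityMeasure μ]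
    (ν : Measure H) [IsProbabilityMeasure ν] [ν.IsMulLeftInvariant] {f : α → H}
    (hf : Measurable f) {s : Set α} {t : Set H} (ht : MeasurableSet t)
    (h : ∀ y, μ s ≤ μ {x | f x * y ∈ t}) : μ s ≤ ν t := by
  have hS : MeasurableSet {p : α × H | f p.1 * p.2 ∈ t} :=
    ((hf.comp measurable_fst).mul measurable_snd) ht
  calc μ s = ∫⁻ _, μ s ∂ν := by simp
    _ ≤ ∫⁻ y, μ {x | f x * y ∈ t} ∂ν := lintegral_mono h
    _ = ∫⁻ x, ν ((fun y => f x * y) ⁻¹' t) ∂μ :=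
      (Measure.prod_apply_symm hS).symm.trans (Measure.prod_apply hS)
    _ = ν t := by simp

theorem dotProduct_star_self_eq_sum_norm_sq {m : Type*} [Fintype m] (x : m → ℂ) :
    star x ⬝ᵥ x = ((∑ i, ‖x i‖ ^ 2 : ℝ) : ℂ) := by
  simp [dotProduct, Complex.conj_mul']

theorem sum_norm_sq_mulVec_of_mem_unitaryGroup {m : Type*} [Fintype m] [DecidableEq m]
    {U : Matrix m m ℂ} (hU : U ∈ unitaryGroup m ℂ) (x : m → ℂ) :
    ∑ i, ‖(U *ᵥ x) i‖ ^ 2 = ∑ i, ‖x i‖ ^ 2 := by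
  have hdot : star (U *ᵥ x) ⬝ᵥ (U *ᵥ x) = star x ⬝ᵥ x := by
    rw [star_mulVec, dotProduct_mulVec, vecMul_vecMul, ← star_eq_conjTranspose,
      mem_unitaryGroup_iff'.mp hU, vecMul_one]
  exact_mod_cast (dotProduct_star_self_eq_sum_norm_sq _).symm.trans
    (hdot.trans (dotProduct_star_self_eq_sum_norm_sq x))

theorem firstColumn_eq_mulVec {m : ℕ} (hm : 1 ≤ m) (U : unitaryGroup (Fin m) ℂ) :
    firstColumn hm U = (U : Matrix (Fin m) (Fin m) ℂ) *ᵥ Pi.single ⟨0, hm⟩ 1 :=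
  (mulVec_single_one _ _).symm

theorem sum_norm_sq_firstColumn {m : ℕ} (hm : 1 ≤ m) (U : unitaryGroup (Fin m) ℂ) :
    ∑ i, ‖firstColumn hm U i‖ ^ 2 = 1 := by
  rw [firstColumn_eq_mulVec, sum_norm_sq_mulVec_of_mem_unitaryGroup U.2,
    Fintype.sum_eq_single ⟨0, hm⟩ fun i hi => by simp [hi]]
  simp

theorem firstColumn_mul {m : ℕ} (hm : 1 ≤ m) (U V : unitaryGroup (Fin m) ℂ) :
    firstColumn hm (U * V) = (U : Matrix (Fin m) (Fin m) ℂ) *ᵥ firstColumn hm V := by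
  simp only [firstColumn_eq_mulVec, Submonoid.coe_mul, mulVec_mulVec]

theorem exists_firstColumn_eq {m : ℕ} (hm : 1 ≤ m) {v : Fin m → ℂ}
    (hv : ∑ i, ‖v i‖ ^ 2 = 1) : ∃ V : unitaryGroup (Fin m) ℂ, firstColumn hm V = v := by
  have hv_orthonormal :
      Orthonormal ℂ (({⟨0, hm⟩} : Set (Fin m)).domRestrict fun _ => WithLp.toLp 2 v) :=
    ⟨fun _ => by simp [EuclideanSpace.norm_eq, hv],
      fun i j hij => absurd (Subsingleton.elim i j) hij⟩
  obtain ⟨b, hb⟩ := hv_orthonormal.exists_orthonormalBasis_extension_of_card_eq (by simp)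
  refine ⟨⟨_, (EuclideanSpace.basisFun (Fin m) ℂ).toMatrix_orthonormalBasis_mem_unitary b⟩,
    ?_⟩
  ext i
  simp [firstColumn, Module.Basis.toMatrix_apply, hb ⟨0, hm⟩ rfl]

section QuadraticForm

variable {m : ℕ} (M : Matrix (Fin m) (Fin m) ℂ)

theorem isClosed_setOf_norm_qform_firstColumn_le (hm : 1 ≤ m) (ε : ℝ) :
    IsClosed {U : unitaryGroup (Fin m) ℂ | ‖qform M (firstColumn hm U)‖ ≤ ε} := by
  have hcol : Continuous (firstColumn hm) :=
    continuous_pi fun i => continuous_subtype_val.matrix_elem i _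
  have hqform : Continuous (qform M) :=
    continuous_star.dotProduct (continuous_const.matrix_mulVec continuous_id)
  exact isClosed_le (hqform.comp hcol).norm continuous_const

theorem qform_reindex {k : ℕ} (e : Fin m ≃ Fin k) (x : Fin k → ℂ) :
    qform (reindex e e M) x = qform M (x ∘ e) := by
  simp only [qform, reindex_apply, dotProduct, mulVec, submatrix_apply, Pi.star_apply]
  rw [← e.sum_comp]
  simp_rw [← e.sum_comp (fun j => M _ (e.symm j) * x j), Equiv.symm_apply_apply]
  rfl

theorem qform_ofReal_smul (t : ℝ) (y : Fin m → ℂ) :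
    qform M ((t : ℂ) • y) = ((t ^ 2 : ℝ) : ℂ) * qform M y := by
  simp only [qform, mulVec_smul, star_smul, smul_dotProduct, dotProduct_smul, smul_eq_mul,
    Complex.star_def, Complex.conj_ofReal]
  push_cast
  ring

theorem sum_norm_sq_ofReal_smul (t : ℝ) (y : Fin m → ℂ) :
    ∑ i, ‖((t : ℂ) • y) i‖ ^ 2 = t ^ 2 * ∑ i, ‖y i‖ ^ 2 := by
  simp [mul_pow, Finset.mul_sum]

end QuadraticForm

section DirectSum

variable {a b : ℕ}

theorem dsum_mul (A C : Matrix (Fin a) (Fin a) ℂ) (B D : Matrix (Fin b) (Fin b) ℂ) :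
    dsum A B * dsum C D = dsum (A * C) (B * D) := by
  simp [dsum, fromBlocks_multiply]

theorem dsum_one : dsum (1 : Matrix (Fin a) (Fin a) ℂ) (1 : Matrix (Fin b) (Fin b) ℂ) = 1 := by
  simp [dsum]

theorem star_dsum (A : Matrix (Fin a) (Fin a) ℂ) (B : Matrix (Fin b) (Fin b) ℂ) :
    star (dsum A B) = dsum (star A) (star B) := by
  simp [dsum, star_eq_conjTranspose, conjTranspose_submatrix, fromBlocks_conjTranspose]

theorem dsum_mem_unitaryGroup {A : Matrix (Fin a) (Fin a) ℂ} {B : Matrix (Fin b) (Fin b) ℂ}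
    (hA : A ∈ unitaryGroup (Fin a) ℂ) (hB : B ∈ unitaryGroup (Fin b) ℂ) :
    dsum A B ∈ unitaryGroup (Fin (a + b)) ℂ := by
  rw [mem_unitaryGroup_iff', star_dsum, dsum_mul, mem_unitaryGroup_iff'.mp hA,
    mem_unitaryGroup_iff'.mp hB, dsum_one]

theorem continuous_dsum :
    Continuous fun p : Matrix (Fin a) (Fin a) ℂ × Matrix (Fin b) (Fin b) ℂ => dsum p.1 p.2 :=
  (continuous_fst.matrix_fromBlocks continuous_const continuous_const
    continuous_snd).matrix_reindex _ _

def dsumUnitary (U : unitaryGroup (Fin a) ℂ) (V : unitaryGroup (Fin b) ℂ) :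
    unitaryGroup (Fin (a + b)) ℂ :=
  ⟨dsum U V, dsum_mem_unitaryGroup U.2 V.2⟩

theorem continuous_dsumUnitary :
    Continuous fun p : unitaryGroup (Fin a) ℂ × unitaryGroup (Fin b) ℂ =>
      dsumUnitary p.1 p.2 :=
  (continuous_dsum.comp (continuous_subtype_val.prodMap continuous_subtype_val)).subtype_mk _

theorem dsum_mulVec_castAdd (A : Matrix (Fin a) (Fin a) ℂ) (B : Matrix (Fin b) (Fin b) ℂ)
    (z : Fin (a + b) → ℂ) (i : Fin a) :
    (dsum A B *ᵥ z) (Fin.castAdd b i) = (A *ᵥ fun j => z (Fin.castAdd b j)) i := by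
  simp [dsum, mulVec, dotProduct, Fin.sum_univ_add]

theorem firstColumn_dsumUnitary_mul_castAdd (h : 1 ≤ a + b) (U : unitaryGroup (Fin a) ℂ)
    (W : unitaryGroup (Fin b) ℂ) (V : unitaryGroup (Fin (a + b)) ℂ) (i : Fin a) :
    firstColumn h (dsumUnitary U W * V) (Fin.castAdd b i) =
      ((U : Matrix (Fin a) (Fin a) ℂ) *ᵥ fun j => firstColumn h V (Fin.castAdd b j)) i := by
  rw [firstColumn_mul]
  exact dsum_mulVec_castAdd _ _ _ i

theorem qform_dsum (A : Matrix (Fin a) (Fin a) ℂ) (B : Matrix (Fin b) (Fin b) ℂ)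
    (z : Fin (a + b) → ℂ) :
    qform (dsum A B) z =
      qform A (fun i => z (Fin.castAdd b i)) + qform B (fun j => z (Fin.natAdd a j)) := by
  simp [qform, dsum, dotProduct, mulVec, Fin.sum_univ_add]

theorem norm_qform_dsum_le {c : ℝ} (A : Matrix (Fin a) (Fin a) ℂ)
    (B : Matrix (Fin b) (Fin b) ℂ) (z : Fin (a + b) → ℂ)
    (hA : ‖qform A (fun i => z (Fin.castAdd b i))‖ ≤ c * ∑ i, ‖z (Fin.castAdd b i)‖ ^ 2)
    (hB : ‖qform B (fun j => z (Fin.natAdd a j))‖ ≤ c * ∑ j, ‖z (Fin.natAdd a j)‖ ^ 2) :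
    ‖qform (dsum A B) z‖ ≤ c * ∑ k, ‖z k‖ ^ 2 := by
  rw [qform_dsum, Fin.sum_univ_add, mul_add]
  exact (norm_add_le _ _).trans (add_le_add hA hB)

end DirectSum

theorem norm_qform_smul_Nmat_le {ε : ℝ} (hε : 0 ≤ ε) (y : Fin 2 → ℂ) :
    ‖qform ((ε : ℂ) • Nmat) y‖ ≤ ε * ∑ i, ‖y i‖ ^ 2 := by
  have hqform : qform ((ε : ℂ) • Nmat) y = ε * 2 * (star (y 0) * y 1) := by
    simp [qform, Nmat, dotProduct, mulVec, Fin.sum_univ_two]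
    ring
  rw [hqform, norm_mul, norm_mul, norm_mul, norm_star, Fin.sum_univ_two]
  simp only [Complex.norm_real, Real.norm_of_nonneg hε, Complex.norm_two]
  nlinarith [sq_nonneg (‖y 0‖ - ‖y 1‖)]

theorem norm_qform_Mprime_le {n : ℕ} (M : Matrix (Fin n) (Fin n) ℂ) {ε : ℝ} (hε : 0 ≤ ε)
    (z : Fin (n + 4) → ℂ)
    (hM : ‖qform M (fun i => z (Fin.castAdd 4 i))‖ ≤
      ε * ∑ i, ‖z (Fin.castAdd 4 i)‖ ^ 2) :
    ‖qform (Mprime M ε) z‖ ≤ ε * ∑ k, ‖z k‖ ^ 2 := by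
  rw [Mprime, qform_reindex, ← (finCongr _).sum_comp]
  exact norm_qform_dsum_le _ _ _ (norm_qform_dsum_le _ _ _ hM (norm_qform_smul_Nmat_le hε _))
    (norm_qform_smul_Nmat_le hε _)

/-- For `x ≠ 0` the event on the right is the preimage of the one on the left under
`U ↦ U V`, where `V` is a unitary with first column `x / ‖x‖`. -/
theorem measure_le_measure_norm_qform_mulVec_le {n : ℕ} (hn : 1 ≤ n)
    (M : Matrix (Fin n) (Fin n) ℂ) (ε : ℝ) (μ : Measure (unitaryGroup (Fin n) ℂ))
    [μ.IsHaarMeasure] [IsProbabilityMeasure μ] (x : Fin n → ℂ) :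
    μ {U | ‖qform M (firstColumn hn U)‖ ≤ ε} ≤
      μ {U | ‖qform M ((U : Matrix (Fin n) (Fin n) ℂ) *ᵥ x)‖ ≤
        ε * ∑ i, ‖((U : Matrix (Fin n) (Fin n) ℂ) *ᵥ x) i‖ ^ 2} := by
  by_cases hx : x = 0
  · refine measure_mono fun U _ => ?_
    simp [hx, qform]
  set t := √(∑ i, ‖x i‖ ^ 2)
  have ht : 0 < t := Real.sqrt_pos.mpr <| by
    obtain ⟨i, hi⟩ := Function.ne_iff.mp hx
    exact Finset.sum_pos' (fun _ _ => by positivity)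
      ⟨i, Finset.mem_univ _, pow_pos (norm_pos_iff.mpr hi) 2⟩
  have ht_sq : t ^ 2 = ∑ i, ‖x i‖ ^ 2 := Real.sq_sqrt (by positivity)
  obtain ⟨V, hV⟩ := exists_firstColumn_eq hn (v := ((t⁻¹ : ℝ) : ℂ) • x) <| by
    rw [sum_norm_sq_ofReal_smul, ← ht_sq, inv_pow, inv_mul_cancel₀ (by positivity)]
  have hx_eq : x = (t : ℂ) • firstColumn hn V := by
    rw [hV, smul_smul, ← Complex.ofReal_mul, mul_inv_cancel₀ ht.ne', Complex.ofReal_one,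
      one_smul]
  have := Measure.IsHaarMeasure.isMulRightInvariant_of_isProbabilityMeasure μ
  rw [← measure_preimage_mul_right μ V]
  refine measure_mono fun U hU => ?_
  simp only [Set.mem_preimage, Set.mem_ofPred_eq, firstColumn_mul] at hU ⊢
  rw [hx_eq, mulVec_smul, qform_ofReal_smul, sum_norm_sq_ofReal_smul,
    sum_norm_sq_mulVec_of_mem_unitaryGroup U.2, sum_norm_sq_firstColumn, norm_mul,
    Complex.norm_real, Real.norm_of_nonneg (by positivity), mul_one]
  nlinarith

/-- regularization only increases small-ball probability:
`Pr(|q* M q| ≤ ε) ≤ Pr(|q'* M' q'| ≤ ε)` where `M' = M ⊕ εN ⊕ εN`. -/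
theorem stmt5 (n : ℕ) (hn : 1 ≤ n) (M : Matrix (Fin n) (Fin n) ℂ) (ε : ℝ) (hε : 0 < ε)
    (μ : Measure (Matrix.unitaryGroup (Fin n) ℂ)) [μ.IsHaarMeasure] [IsProbabilityMeasure μ]
    (ν : Measure (Matrix.unitaryGroup (Fin (n + 4)) ℂ)) [ν.IsHaarMeasure]
    [IsProbabilityMeasure ν] :
    (μ {U | ‖qform M (firstColumn hn U)‖ ≤ ε}).toReal ≤
      (ν {U | ‖qform (Mprime M ε) (firstColumn (by omega) U)‖ ≤ ε}).toReal := by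
  have h4 : 1 ≤ n + 4 := by omega
  have hembed : Measurable fun U : unitaryGroup (Fin n) ℂ =>
      dsumUnitary U (1 : unitaryGroup (Fin 4) ℂ) :=
    (continuous_dsumUnitary.comp (continuous_id.prodMk continuous_const)).measurable
  refine ENNReal.toReal_mono (measure_ne_top ν _) <|
    measure_le_of_forall_le_measure_mul_mem μ ν hembed
      (isClosed_setOf_norm_qform_firstColumn_le _ h4 ε).measurableSet fun V => ?_
  refine (measure_le_measure_norm_qform_mulVec_le hn M ε μ
    fun i => firstColumn h4 V (Fin.castAdd 4 i)).trans <| measure_mono fun U hU => ?_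
  have hM := norm_qform_Mprime_le M hε.le (firstColumn h4 (dsumUnitary U 1 * V)) <| by
    simp only [firstColumn_dsumUnitary_mul_castAdd]
    exact hU
  rwa [sum_norm_sq_firstColumn, mul_one] at hM
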